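/- Let G be a connected hypergraph with rank k and suppose 0 is an H-eigenvalue of the signless Laplacian Q_G with real eigenvector x. Then k is even, and for every edge e and every i ∈ e, x^e x_i^{k-|e|} = -x_j^k where |x_j| = max_i |x_i|; consequently, with V1 = {u : x_u = -|x_j|}, every edge of G has even cardinality and contains an odd number of vertices of V1, so G is odd-bipartite. -/

import Mathlib

open Finset

/-- The multiset of entries of an index tuple. -/
def idxMultiset {n k : ℕ} (idx : Fin k → Fin n) : Multiset (Fin n) := ↑(List.ofFn idx)

/-- Entries of the adjacency tensor of a general hypergraph with edge set `E` and rank `k`: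
`1/(k-1)!` on tuples that are permutations of an edge of size `k`;
`(k-s+1)!/k!` on tuples whose multiset is an edge of size `s < k` with one of its
vertices repeated `k-s+1` times; `0` otherwise. -/
noncomputable def adjEntry {R : Type*} [Field R] {n : ℕ} (k : ℕ)
    (E : Finset (Finset (Fin n))) (idx : Fin k → Fin n) : R :=
  ∑ e ∈ E,
    if e.card = k ∧ idxMultiset idx = e.val then 1 / (Nat.factorial (k - 1) : R)
    else if e.card < k ∧ ∃ j ∈ e, idxMultiset idx = e.val + Multiset.replicate (k - e.card) j then
      (Nat.factorial (k - e.card + 1) : R) / (Nat.factorial k : R)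
    else 0

/-- Full contraction `A x^k = ∑ a_{i₁…i_k} x_{i₁} ⋯ x_{i_k}`. -/
noncomputable def tFull {R : Type*} [CommRing R] {n : ℕ} (k : ℕ)
    (A : (Fin k → Fin n) → R) (x : Fin n → R) : R :=
  ∑ idx : Fin k → Fin n, A idx * ∏ j, x (idx j)

/-- `(A x^{k-1})_i = ∑_{i₂,…,i_k} a_{i i₂ … i_k} x_{i₂} ⋯ x_{i_k}`. -/
noncomputable def tApply {R : Type*} [CommRing R] {n : ℕ} (k : ℕ) [NeZero k]
    (A : (Fin k → Fin n) → R) (x : Fin n → R) (i : Fin n) : R :=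
  ∑ idx : Fin k → Fin n,
    if idx 0 = i then A idx * ∏ j ∈ Finset.univ.erase 0, x (idx j) else 0

/-- Degree of a vertex: the number of edges containing it. -/
def deg {n : ℕ} (E : Finset (Finset (Fin n))) (i : Fin n) : ℕ :=
  (E.filter (fun e => i ∈ e)).card

/-- `E` has rank `k`: all edges have size at most `k` and some edge has size `k`. -/
def HasRank {n : ℕ} (E : Finset (Finset (Fin n))) (k : ℕ) : Prop :=
  (∀ e ∈ E, e.card ≤ k) ∧ ∃ e ∈ E, e.card = k

/-- Connectedness of a hypergraph: any two vertices are joined by a sequence of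
vertices consecutively sharing an edge. -/
def Conn {n : ℕ} (E : Finset (Finset (Fin n))) : Prop :=
  ∀ u v : Fin n, Relation.ReflTransGen (fun a b => ∃ e ∈ E, a ∈ e ∧ b ∈ e) u v

/-- The spectral radius of a symmetric nonnegative tensor, via the variational
characterization `ρ(A) = max { x^T (A x^{k-1}) : x ≥ 0, ∑ xᵢ^k = 1 }`. -/
noncomputable def specRad {n : ℕ} (k : ℕ) (A : (Fin k → Fin n) → ℝ) : ℝ :=
  sSup {r : ℝ | ∃ x : Fin n → ℝ, (∀ i, 0 ≤ x i) ∧ ∑ i, x i ^ k = 1 ∧ r = tFull k A x}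

/-- Entries of the Laplacian tensor `L = D - A`. -/
noncomputable def lapEntry {R : Type*} [Field R] {n : ℕ} (k : ℕ) [NeZero k]
    (E : Finset (Finset (Fin n))) (idx : Fin k → Fin n) : R :=
  (if ∀ j, idx j = idx 0 then (deg E (idx 0) : R) else 0) - adjEntry k E idx

/-- Entries of the signless Laplacian tensor `Q = D + A`. -/
noncomputable def qEntry {R : Type*} [Field R] {n : ℕ} (k : ℕ) [NeZero k]
    (E : Finset (Finset (Fin n))) (idx : Fin k → Fin n) : R :=
  (if ∀ j, idx j = idx 0 then (deg E (idx 0) : R) else 0) + adjEntry k E idx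

/-!
Multiplying the eigenvalue equation at `i` by `xᵢ` gives
`dᵢ xᵢ^k + ∑ a_{i i₂ … i_k} xᵢ x_{i₂} ⋯ x_{i_k} = 0`, and the entries `a_{i i₂ … i_k}` sum to `dᵢ`
(a multinomial count of index tuples). When `|xᵢ|` is maximal every product in the sum has modulus
at most `|xᵢ|^k`, so each product with a nonzero coefficient equals `-xᵢ^k`; in particular
`x^e x_v^{k-|e|} = -xᵢ^k` for `i, v ∈ e`. This forces `|x_v| = |xᵢ|` along edges, hence everywhere
by connectivity. For odd `k`, `x` would be constant on an edge and the identity would read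
`xᵢ^k = -xᵢ^k`. For even `k` all coordinates are `±|x_j|`, and comparing the identity at a positive
and at a negative vertex of an edge gives the parity statements.
-/

open scoped Nat

variable {n : ℕ}

def tuplesWith (r : ℕ) (m : Multiset (Fin n)) : Finset (Fin r → Fin n) :=
  univ.filter fun f => idxMultiset f = m

theorem idxMultiset_cons {r : ℕ} (i : Fin n) (g : Fin r → Fin n) :
    idxMultiset (Fin.cons i g : Fin (r + 1) → Fin n) = i ::ₘ idxMultiset g := by
  simp [idxMultiset, List.ofFn_succ]

theorem card_filter_head_tuplesWith (r : ℕ) (i : Fin n) (m : Multiset (Fin n)) :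
    #((tuplesWith (r + 1) m).filter (· 0 = i)) =
      if i ∈ m then #(tuplesWith r (m.erase i)) else 0 := by
  have himage : (tuplesWith (r + 1) m).filter (· 0 = i) =
      (univ.filter fun g : Fin r → Fin n => i ::ₘ idxMultiset g = m).image (Fin.cons i) := by
    ext f
    simp only [tuplesWith, mem_filter, mem_univ, true_and, mem_image]
    constructor
    · rintro ⟨hm, rfl⟩
      exact ⟨Fin.tail f, by rwa [← idxMultiset_cons, Fin.cons_self_tail], Fin.cons_self_tail f⟩
    · rintro ⟨g, hg, rfl⟩
      exact ⟨by rwa [idxMultiset_cons], rfl⟩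
  rw [himage, card_image_of_injective _ (Fin.cons_right_injective (α := fun _ => Fin n) i)]
  split_ifs with hi
  · congr 1
    ext g
    simp only [tuplesWith, mem_filter, mem_univ, true_and]
    exact ⟨fun h => by rw [← h, Multiset.erase_cons_head],
      fun h => by rw [h, Multiset.cons_erase hi]⟩
  · rw [card_eq_zero, filter_eq_empty_iff]
    rintro g - rfl
    exact hi (Multiset.mem_cons_self _ _)

theorem card_tuplesWith_succ (r : ℕ) (m : Multiset (Fin n)) :
    #(tuplesWith (r + 1) m) = ∑ a ∈ m.toFinset, #(tuplesWith r (m.erase a)) := by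
  rw [card_eq_sum_card_fiberwise (f := (· 0)) (t := m.toFinset)]
  · refine sum_congr rfl fun a ha => ?_
    rw [card_filter_head_tuplesWith, if_pos (Multiset.mem_toFinset.1 ha)]
  · intro f hf
    simp only [tuplesWith, coe_filter, mem_univ, true_and, Set.mem_ofPred_eq] at hf
    rw [mem_coe, Multiset.mem_toFinset, ← hf, ← Fin.cons_self_tail f, idxMultiset_cons]
    exact Multiset.mem_cons_self _ _

theorem prod_factorial_count_eq_mul_erase {m : Multiset (Fin n)} {i : Fin n} (hi : i ∈ m) :
    ∏ b, (m.count b)! = m.count i * ∏ b, ((m.erase i).count b)! := by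
  rw [← mul_prod_erase _ _ (mem_univ i), ← mul_prod_erase _ _ (mem_univ i), ← mul_assoc,
    Multiset.count_erase_self, Nat.mul_factorial_pred (Multiset.count_ne_zero.2 hi)]
  congr 1
  refine prod_congr rfl fun b hb => ?_
  rw [Multiset.count_erase_of_ne (ne_of_mem_erase hb)]

theorem card_tuplesWith_mul_prod_factorial (r : ℕ) (m : Multiset (Fin n))
    (hm : Multiset.card m = r) : #(tuplesWith r m) * ∏ b, (m.count b)! = r ! := by
  induction r generalizing m with
  | zero =>
    obtain rfl := Multiset.card_eq_zero.1 hm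
    simp [tuplesWith, idxMultiset]
  | succ r ih =>
    calc #(tuplesWith (r + 1) m) * ∏ b, (m.count b)!
        = ∑ a ∈ m.toFinset,
            #(tuplesWith r (m.erase a)) * (∏ b, ((m.erase a).count b)!) * m.count a := by
          rw [card_tuplesWith_succ, sum_mul]
          refine sum_congr rfl fun a ha => ?_
          rw [prod_factorial_count_eq_mul_erase (Multiset.mem_toFinset.1 ha)]
          ring
      _ = ∑ a ∈ m.toFinset, r ! * m.count a := by
          refine sum_congr rfl fun a ha => ?_
          rw [ih _ (by rw [Multiset.card_erase_of_mem (Multiset.mem_toFinset.1 ha), hm]; rfl)]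
      _ = (r + 1)! := by
          rw [← mul_sum, Multiset.toFinset_sum_count_eq, hm, Nat.factorial_succ, mul_comm]

theorem card_filter_head_tuplesWith_mul_prod_factorial (r : ℕ) (i : Fin n) (m : Multiset (Fin n))
    (hm : Multiset.card m = r + 1) :
    #((tuplesWith (r + 1) m).filter (· 0 = i)) * ∏ b, (m.count b)! = m.count i * r ! := by
  rw [card_filter_head_tuplesWith]
  split_ifs with hi
  · rw [prod_factorial_count_eq_mul_erase hi, mul_left_comm,
      card_tuplesWith_mul_prod_factorial _ _ (by rw [Multiset.card_erase_of_mem hi, hm]; rfl)]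
  · rw [Multiset.count_eq_zero.2 hi, zero_mul, zero_mul]

theorem sum_filter_head_ite_idxMultiset {M : Type*} [AddCommMonoid M] (r : ℕ) (i : Fin n)
    (m : Multiset (Fin n)) (c : M) :
    ∑ idx ∈ univ.filter (fun idx : Fin (r + 1) → Fin n => idx 0 = i),
      (if idxMultiset idx = m then c else 0) = #((tuplesWith (r + 1) m).filter (· 0 = i)) • c := by
  rw [sum_ite, sum_const_zero, add_zero, sum_const, filter_filter]
  congr 2
  ext idx
  simp [tuplesWith, and_comm]

theorem prod_factorial_count_val (s : Finset (Fin n)) : ∏ b, (s.val.count b)! = 1 :=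
  prod_eq_one fun b _ => by rw [Multiset.count_eq_of_nodup s.nodup]; split_ifs <;> rfl

theorem prod_factorial_count_add_replicate {s : Finset (Fin n)} {j : Fin n} (hj : j ∈ s) (t : ℕ) :
    ∏ b, ((s.val + Multiset.replicate t j).count b)! = (t + 1)! := by
  rw [prod_eq_single_of_mem j (mem_univ j) fun b _ hb => ?_]
  · rw [Multiset.count_add, Multiset.count_eq_one_of_mem s.nodup hj, Multiset.count_replicate_self,
      add_comm]
  · rw [Multiset.count_add, Multiset.count_eq_of_nodup s.nodup, Multiset.count_replicate,
      if_neg (Ne.symm hb)]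
    split_ifs <;> rfl

theorem sum_count_add_replicate (s : Finset (Fin n)) (i : Fin n) (t : ℕ) :
    ∑ j ∈ s, (s.val + Multiset.replicate t j).count i = s.val.count i * (s.card + t) := by
  simp only [Multiset.count_add, sum_add_distrib, sum_const, smul_eq_mul, Multiset.count_replicate]
  rw [sum_ite_eq', Multiset.count_eq_of_nodup s.nodup]
  by_cases hi : i ∈ s <;> simp [hi, mul_comm]

theorem exists_head_eq_idxMultiset_eq {r : ℕ} {m : Multiset (Fin n)}
    (hm : Multiset.card m = r + 1) {i : Fin n} (hi : i ∈ m) :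
    ∃ idx : Fin (r + 1) → Fin n, idx 0 = i ∧ idxMultiset idx = m := by
  have h := card_filter_head_tuplesWith_mul_prod_factorial r i m hm
  have hpos : 0 < #((tuplesWith (r + 1) m).filter (· 0 = i)) := by
    refine Nat.pos_of_mul_pos_right (b := ∏ b, (m.count b)!) ?_
    rw [h]
    exact Nat.mul_pos (Multiset.count_pos.2 hi) r.factorial_pos
  obtain ⟨idx, hidx⟩ := card_pos.1 hpos
  simp only [tuplesWith, mem_filter, mem_univ, true_and] at hidx
  exact ⟨idx, hidx.2, hidx.1⟩

theorem prod_apply_eq_prod_map_idxMultiset {M : Type*} [CommMonoid M] {k : ℕ}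
    (idx : Fin k → Fin n) (x : Fin n → M) :
    ∏ l, x (idx l) = ((idxMultiset idx).map x).prod := by
  simp [idxMultiset, List.prod_ofFn]

noncomputable def edgeEntry {R : Type*} [Field R] (k : ℕ) (e : Finset (Fin n))
    (idx : Fin k → Fin n) : R :=
  if e.card = k ∧ idxMultiset idx = e.val then 1 / ((k - 1)! : R)
  else if e.card < k ∧ ∃ j ∈ e, idxMultiset idx = e.val + Multiset.replicate (k - e.card) j then
    ((k - e.card + 1)! : R) / (k ! : R)
  else 0

theorem adjEntry_eq_sum_edgeEntry {R : Type*} [Field R] (k : ℕ) (E : Finset (Finset (Fin n)))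
    (idx : Fin k → Fin n) : (adjEntry k E idx : R) = ∑ e ∈ E, edgeEntry k e idx :=
  rfl

theorem edgeEntry_of_card_eq {R : Type*} [Field R] {k : ℕ} {e : Finset (Fin n)}
    (he : e.card = k) (idx : Fin k → Fin n) :
    (edgeEntry k e idx : R) = if idxMultiset idx = e.val then 1 / ((k - 1)! : R) else 0 := by
  simp [edgeEntry, he]

theorem edgeEntry_of_card_lt {R : Type*} [Field R] {k : ℕ} {e : Finset (Fin n)}
    (he : e.card < k) (idx : Fin k → Fin n) :
    (edgeEntry k e idx : R) = ∑ j ∈ e,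
      if idxMultiset idx = e.val + Multiset.replicate (k - e.card) j then
        ((k - e.card + 1)! : R) / (k ! : R) else 0 := by
  rw [edgeEntry, if_neg (fun h => he.ne h.1)]
  simp only [he, true_and]
  split_ifs with h
  · obtain ⟨j₀, hj₀, hm⟩ := h
    rw [sum_eq_single_of_mem j₀ hj₀ fun j _ hj => if_neg fun hmj => hj ?_, if_pos hm]
    exact Multiset.replicate_right_injective (by omega) (add_left_cancel (hmj.symm.trans hm))
  · push Not at h
    exact (sum_eq_zero fun j hj => if_neg (h j hj)).symm

theorem sum_filter_head_edgeEntry {R : Type*} [Field R] [CharZero R] {r : ℕ} {e : Finset (Fin n)}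
    (he : e.card ≤ r + 1) (i : Fin n) :
    ∑ idx ∈ univ.filter (fun idx : Fin (r + 1) → Fin n => idx 0 = i), (edgeEntry (r + 1) e idx : R)
      = e.val.count i := by
  have hr : (r ! : R) ≠ 0 := Nat.cast_ne_zero.2 r.factorial_ne_zero
  rcases he.eq_or_lt with hk | hk
  · simp only [edgeEntry_of_card_eq hk, sum_filter_head_ite_idxMultiset, nsmul_eq_mul,
      Nat.add_sub_cancel]
    have h := card_filter_head_tuplesWith_mul_prod_factorial r i e.val hk
    rw [prod_factorial_count_val, mul_one] at h
    rw [h]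
    push_cast
    field_simp
  · simp only [edgeEntry_of_card_lt hk]
    rw [sum_comm]
    have hpat : ∀ j ∈ e,
        ∑ idx ∈ univ.filter (fun idx : Fin (r + 1) → Fin n => idx 0 = i),
          (if idxMultiset idx = e.val + Multiset.replicate (r + 1 - e.card) j then
            ((r + 1 - e.card + 1)! : R) / ((r + 1)! : R) else 0)
        = ((e.val + Multiset.replicate (r + 1 - e.card) j).count i : R) / (r + 1) := by
      intro j hj
      have h := card_filter_head_tuplesWith_mul_prod_factorial r i
        (e.val + Multiset.replicate (r + 1 - e.card) j) (by simp; omega)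
      rw [prod_factorial_count_add_replicate hj] at h
      have hR := congrArg (Nat.cast : ℕ → R) h
      push_cast at hR
      rw [sum_filter_head_ite_idxMultiset, nsmul_eq_mul, Nat.factorial_succ r]
      push_cast
      field_simp
      linear_combination hR
    rw [sum_congr rfl hpat, ← sum_div]
    have hsum := sum_count_add_replicate e i (r + 1 - e.card)
    rw [show e.card + (r + 1 - e.card) = r + 1 by omega] at hsum
    rw [← Nat.cast_sum, hsum]
    push_cast
    field_simp

theorem sum_filter_head_adjEntry {R : Type*} [Field R] [CharZero R] {r : ℕ}
    {E : Finset (Finset (Fin n))} (hrk : ∀ e ∈ E, e.card ≤ r + 1) (i : Fin n) :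
    ∑ idx ∈ univ.filter (fun idx : Fin (r + 1) → Fin n => idx 0 = i), (adjEntry (r + 1) E idx : R)
      = deg E i := by
  simp only [adjEntry_eq_sum_edgeEntry]
  rw [sum_comm, sum_congr rfl fun e he => sum_filter_head_edgeEntry (hrk e he) i, deg,
    card_filter, Nat.cast_sum]
  exact sum_congr rfl fun e _ => by rw [Multiset.count_eq_of_nodup e.nodup]; simp

theorem edgeEntry_nonneg {R : Type*} [Field R] [LinearOrder R] [IsStrictOrderedRing R] (k : ℕ)
    (e : Finset (Fin n)) (idx : Fin k → Fin n) : (0 : R) ≤ edgeEntry k e idx := by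
  unfold edgeEntry
  split_ifs <;> positivity

theorem edgeEntry_pos {R : Type*} [Field R] [LinearOrder R] [IsStrictOrderedRing R] {k : ℕ}
    {e : Finset (Fin n)} (hek : e.card ≤ k) {v : Fin n} (hv : v ∈ e) {idx : Fin k → Fin n}
    (hms : idxMultiset idx = e.val + Multiset.replicate (k - e.card) v) :
    (0 : R) < edgeEntry k e idx := by
  rcases hek.eq_or_lt with hk | hk
  · rw [edgeEntry_of_card_eq hk, if_pos (by simp [hms, hk])]
    positivity
  · rw [edgeEntry, if_neg (fun h => hk.ne h.1), if_pos ⟨hk, v, hv, hms⟩]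
    positivity

theorem adjEntry_nonneg {R : Type*} [Field R] [LinearOrder R] [IsStrictOrderedRing R] (k : ℕ)
    (E : Finset (Finset (Fin n))) (idx : Fin k → Fin n) : (0 : R) ≤ adjEntry k E idx :=
  sum_nonneg fun e _ => edgeEntry_nonneg k e idx

theorem adjEntry_pos {R : Type*} [Field R] [LinearOrder R] [IsStrictOrderedRing R] {k : ℕ}
    {E : Finset (Finset (Fin n))} {e : Finset (Fin n)} (he : e ∈ E) (hek : e.card ≤ k) {v : Fin n}
    (hv : v ∈ e) {idx : Fin k → Fin n}
    (hms : idxMultiset idx = e.val + Multiset.replicate (k - e.card) v) :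
    (0 : R) < adjEntry k E idx :=
  (edgeEntry_pos hek hv hms).trans_le
    (single_le_sum (f := fun e => (edgeEntry k e idx : R)) (fun e _ => edgeEntry_nonneg k e idx) he)

theorem mul_tApply {R : Type*} [CommRing R] {k : ℕ} [NeZero k] (A : (Fin k → Fin n) → R)
    (x : Fin n → R) (i : Fin n) :
    x i * tApply k A x i =
      ∑ idx ∈ univ.filter (fun idx : Fin k → Fin n => idx 0 = i), A idx * ∏ l, x (idx l) := by
  rw [tApply, ← sum_filter, mul_sum]
  refine sum_congr rfl fun idx hidx => ?_
  rw [← mul_prod_erase univ (fun l => x (idx l)) (mem_univ 0), (mem_filter.1 hidx).2]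
  ring

theorem sum_filter_head_diag {R : Type*} [CommRing R] {k : ℕ} [NeZero k] (d x : Fin n → R)
    (i : Fin n) :
    ∑ idx ∈ univ.filter (fun idx : Fin k → Fin n => idx 0 = i),
      (if ∀ j, idx j = idx 0 then d (idx 0) else 0) * ∏ l, x (idx l) = d i * x i ^ k := by
  rw [sum_eq_single_of_mem (fun _ => i) (by simp) fun idx hidx hne => ?_]
  · simp
  · rw [if_neg, zero_mul]
    refine fun hconst => hne (funext fun j => ?_)
    rw [hconst j, (mem_filter.1 hidx).2]

theorem deg_mul_pow_add_sum_adjEntry_eq_zero {R : Type*} [Field R] {k : ℕ} [NeZero k]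
    {E : Finset (Finset (Fin n))} {x : Fin n → R} {i : Fin n}
    (heig : tApply k (qEntry k E) x i = 0) :
    deg E i * x i ^ k +
      ∑ idx ∈ univ.filter (fun idx : Fin k → Fin n => idx 0 = i),
        adjEntry k E idx * ∏ l, x (idx l) = 0 := by
  have h := mul_tApply (qEntry k E) x i
  rw [heig, mul_zero] at h
  have hdiag := sum_filter_head_diag (k := k) (fun v => (deg E v : R)) x i
  simp only [qEntry, add_mul, sum_add_distrib] at h hdiag
  rw [← hdiag]
  exact h.symm

theorem eq_neg_of_sum_mul_eq_neg_sum_mul {R ι : Type*} [CommRing R] [LinearOrder R]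
    [IsStrictOrderedRing R] {F : Finset ι} {w p : ι → R} {c : R} (hw : ∀ t ∈ F, 0 ≤ w t)
    (hp : ∀ t ∈ F, |p t| ≤ |c|) (hsum : ∑ t ∈ F, w t * p t = -((∑ t ∈ F, w t) * c))
    {t : ι} (ht : t ∈ F) (hwt : w t ≠ 0) : p t = -c := by
  -- each `c (c + p u)` is nonnegative since `|c p u| ≤ c²`, and their weighted sum vanishes
  have hterm : ∀ u ∈ F, 0 ≤ w u * (c * (c + p u)) := fun u hu => by
    refine mul_nonneg (hw u hu) ?_
    have h := mul_le_mul_of_nonneg_left (hp u hu) (abs_nonneg c)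
    rw [← abs_mul, abs_mul_abs_self] at h
    nlinarith [neg_abs_le (c * p u)]
  have hzero : ∑ u ∈ F, w u * (c * (c + p u)) = 0 := by
    have h : ∑ u ∈ F, w u * (c * (c + p u)) = c * ((∑ u ∈ F, w u) * c + ∑ u ∈ F, w u * p u) := by
      rw [sum_mul, ← sum_add_distrib, mul_sum]
      exact sum_congr rfl fun u _ => by ring
    rw [h, hsum, add_neg_cancel, mul_zero]
  have h := (mul_eq_zero.1 ((sum_eq_zero_iff_of_nonneg hterm).1 hzero t ht)).resolve_left hwt
  rcases mul_eq_zero.1 h with hc | hcp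
  · simpa [hc] using hp t ht
  · linear_combination hcp

theorem Conn.forall_of_mem_edge {E : Finset (Finset (Fin n))} (hconn : Conn E)
    {P : Fin n → Prop} {j : Fin n} (hj : P j) (hstep : ∀ e ∈ E, ∀ a ∈ e, ∀ b ∈ e, P a → P b)
    (v : Fin n) : P v := by
  induction hconn j v with
  | refl => exact hj
  | tail _ hab ih =>
    obtain ⟨e, he, ha, hb⟩ := hab
    exact hstep e he _ ha _ hb ih

theorem abs_prod_mul_pow_le {R ι : Type*} [CommRing R] [LinearOrder R] [IsStrictOrderedRing R]
    [DecidableEq ι] {y : ι → R} {M : R} (hM : ∀ u, |y u| ≤ M) {e : Finset ι} {v : ι}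
    (hv : v ∈ e) {k : ℕ} (hk : e.card ≤ k) :
    |(∏ u ∈ e, y u) * y v ^ (k - e.card)| ≤ |y v| * M ^ (k - 1) := by
  have hM0 : 0 ≤ M := (abs_nonneg _).trans (hM v)
  have hrest : ∏ u ∈ e.erase v, |y u| ≤ M ^ (e.card - 1) := by
    calc ∏ u ∈ e.erase v, |y u| ≤ ∏ u ∈ e.erase v, M :=
          prod_le_prod (fun _ _ => abs_nonneg _) fun u _ => hM u
      _ = M ^ (e.card - 1) := by rw [prod_const, card_erase_of_mem hv]
  calc |(∏ u ∈ e, y u) * y v ^ (k - e.card)|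
      = |y v| * (∏ u ∈ e.erase v, |y u|) * |y v| ^ (k - e.card) := by
        rw [abs_mul, abs_prod, abs_pow, ← mul_prod_erase e _ hv]
    _ ≤ |y v| * M ^ (e.card - 1) * M ^ (k - e.card) := by
        gcongr
        exact hM v
    _ = |y v| * M ^ (k - 1) := by
        have := card_pos.2 ⟨v, hv⟩
        rw [mul_assoc, ← pow_add]
        congr 2
        omega

theorem odd_of_neg_one_pow_mul_eq_neg {R : Type*} [CommRing R] [LinearOrder R]
    [IsStrictOrderedRing R] {m : ℕ} {a : R} (ha : a ≠ 0) (h : (-1) ^ m * a = -a) : Odd m := by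
  rw [← neg_one_mul a] at h
  exact (neg_one_pow_eq_neg_one_iff_odd (by norm_num)).1 (mul_right_cancel₀ ha h)

theorem prod_eq_neg_one_pow_mul_pow {R ι : Type*} [CommRing R] {e : Finset ι} {y : ι → R} {M : R}
    [DecidablePred fun u => y u = -M] (hy : ∀ u ∈ e, y u = M ∨ y u = -M) :
    ∏ u ∈ e, y u = (-1) ^ #(e.filter (y · = -M)) * M ^ e.card := by
  rw [← prod_filter_mul_prod_filter_not e (y · = -M),
    prod_congr rfl fun u hu => (mem_filter.1 hu).2,
    prod_congr rfl fun u hu => ((hy u (mem_filter.1 hu).1).resolve_right (mem_filter.1 hu).2),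
    prod_const, prod_const, neg_pow, mul_assoc, ← pow_add, card_filter_add_card_filter_not]

theorem even_card_and_odd_card_filter {R ι : Type*} [CommRing R] [LinearOrder R]
    [IsStrictOrderedRing R] {e : Finset ι} {y : ι → R} {M : R} [DecidablePred fun u => y u = -M]
    {k : ℕ} (hM : 0 < M) (hk : Even k) (hek : e.card ≤ k) (hne : e.Nonempty)
    (hy : ∀ u ∈ e, y u = M ∨ y u = -M)
    (h : ∀ i ∈ e, (∏ u ∈ e, y u) * y i ^ (k - e.card) = -M ^ k) :
    Even e.card ∧ Odd #(e.filter (y · = -M)) := by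
  set N := #(e.filter (y · = -M))
  have hMk : M ^ k ≠ 0 := (pow_pos hM k).ne'
  have hpow : M ^ e.card * M ^ (k - e.card) = M ^ k := by rw [← pow_add, Nat.add_sub_cancel' hek]
  have hplus : ∀ i ∈ e, y i = M → Odd N := fun i hi hyi => by
    refine odd_of_neg_one_pow_mul_eq_neg hMk ?_
    rw [← h i hi, prod_eq_neg_one_pow_mul_pow hy, hyi, ← hpow]
    ring
  have hminus : ∀ i ∈ e, y i = -M → Odd (N + (k - e.card)) := fun i hi hyi => by
    refine odd_of_neg_one_pow_mul_eq_neg hMk ?_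
    rw [← h i hi, prod_eq_neg_one_pow_mul_pow hy, hyi, neg_pow M, ← hpow]
    ring
  obtain ⟨p, hp, hyp⟩ : ∃ p ∈ e, y p = M := by
    by_contra! hneg
    obtain ⟨i, hi⟩ := hne
    have hN : N = e.card :=
      congrArg card (filter_true_of_mem fun u hu => (hy u hu).resolve_left (hneg u hu))
    have := hminus i hi ((hy i hi).resolve_left (hneg i hi))
    rw [hN, Nat.add_sub_cancel' hek] at this
    exact Nat.not_even_iff_odd.2 this hk
  have hNodd := hplus p hp hyp
  obtain ⟨q, hq⟩ := card_pos.1 hNodd.pos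
  have hrest : Even (k - e.card) :=
    (Nat.odd_add.1 (hminus q (mem_filter.1 hq).1 (mem_filter.1 hq).2)).1 hNodd
  have hcard : Even (e.card + (k - e.card)) := by rwa [Nat.add_sub_cancel' hek]
  exact ⟨(Nat.even_add.1 hcard).2 hrest, hNodd⟩

section Eigenvector

variable {r : ℕ} {E : Finset (Finset (Fin n))} {x : Fin n → ℝ}

theorem prod_eq_neg_pow_of_adjEntry_ne_zero (hrk : ∀ e ∈ E, e.card ≤ r + 1) {i : Fin n}
    (heig : tApply (r + 1) (qEntry (r + 1) E) x i = 0) (hmax : ∀ u, |x u| ≤ |x i|)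
    {idx : Fin (r + 1) → Fin n} (h0 : idx 0 = i) (hA : adjEntry (r + 1) E idx ≠ (0 : ℝ)) :
    ∏ l, x (idx l) = -x i ^ (r + 1) := by
  have hsum := deg_mul_pow_add_sum_adjEntry_eq_zero heig
  rw [← sum_filter_head_adjEntry (R := ℝ) hrk i] at hsum
  refine eq_neg_of_sum_mul_eq_neg_sum_mul (p := fun t => ∏ l, x (t l)) (c := x i ^ (r + 1))
    (fun t _ => adjEntry_nonneg _ E t) (fun t _ => ?_) (by linarith)
    (mem_filter.2 ⟨mem_univ _, h0⟩) hA
  calc |∏ l, x (t l)| = ∏ l, |x (t l)| := abs_prod _ _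
    _ ≤ ∏ _l : Fin (r + 1), |x i| := prod_le_prod (fun _ _ => abs_nonneg _) fun l _ => hmax _
    _ = |x i ^ (r + 1)| := by simp [abs_pow]

theorem prod_mul_pow_eq_neg_pow (hrk : ∀ e ∈ E, e.card ≤ r + 1) {i : Fin n}
    (heig : tApply (r + 1) (qEntry (r + 1) E) x i = 0) (hmax : ∀ u, |x u| ≤ |x i|)
    {e : Finset (Fin n)} (he : e ∈ E) (hi : i ∈ e) {v : Fin n} (hv : v ∈ e) :
    (∏ u ∈ e, x u) * x v ^ (r + 1 - e.card) = -x i ^ (r + 1) := by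
  have hek := hrk e he
  obtain ⟨idx, h0, hms⟩ := exists_head_eq_idxMultiset_eq (r := r)
    (m := e.val + Multiset.replicate (r + 1 - e.card) v) (by simp; omega)
    (Multiset.mem_add.2 (Or.inl hi))
  rw [← prod_eq_neg_pow_of_adjEntry_ne_zero hrk heig hmax h0 (adjEntry_pos he hek hv hms).ne',
    prod_apply_eq_prod_map_idxMultiset, hms, Multiset.map_add, Multiset.prod_add,
    Multiset.map_replicate, Multiset.prod_replicate, prod_eq_multiset_prod]

theorem abs_eq_of_mem_edge (hrk : ∀ e ∈ E, e.card ≤ r + 1) {i : Fin n}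
    (heig : tApply (r + 1) (qEntry (r + 1) E) x i = 0) (hmax : ∀ u, |x u| ≤ |x i|)
    {e : Finset (Fin n)} (he : e ∈ E) (hi : i ∈ e) {v : Fin n} (hv : v ∈ e) :
    |x v| = |x i| := by
  have hle := abs_prod_mul_pow_le hmax hv (hrk e he)
  rw [prod_mul_pow_eq_neg_pow hrk heig hmax he hi hv, abs_neg, abs_pow, Nat.add_sub_cancel,
    pow_succ'] at hle
  refine le_antisymm (hmax v) ?_
  rcases (abs_nonneg (x i)).eq_or_lt with h | h
  · rw [← h]
    exact abs_nonneg _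
  · exact le_of_mul_le_mul_right hle (pow_pos h r)

theorem abs_eq_of_conn (hconn : Conn E) (hrk : ∀ e ∈ E, e.card ≤ r + 1)
    (heig : ∀ i, tApply (r + 1) (qEntry (r + 1) E) x i = 0) {j : Fin n}
    (hmax : ∀ u, |x u| ≤ |x j|) (v : Fin n) : |x v| = |x j| :=
  hconn.forall_of_mem_edge (P := fun v => |x v| = |x j|) rfl (fun _ he a ha _ hb hxa =>
    (abs_eq_of_mem_edge hrk (heig a) (fun u => hxa ▸ hmax u) he ha hb).trans hxa) v

theorem even_of_abs_eq (hrk : ∀ e ∈ E, e.card ≤ r + 1)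
    (heig : ∀ i, tApply (r + 1) (qEntry (r + 1) E) x i = 0) {j : Fin n}
    (hmod : ∀ v, |x v| = |x j|) (hxj : x j ≠ 0) {e : Finset (Fin n)} (he : e ∈ E)
    (hne : e.Nonempty) : Even (r + 1) := by
  by_contra hodd
  rw [Nat.not_even_iff_odd] at hodd
  obtain ⟨i, hi⟩ := hne
  have hmax : ∀ u v, |x v| ≤ |x u| := fun u v => ((hmod v).trans (hmod u).symm).le
  have hloc : ∀ u ∈ e, (∏ u ∈ e, x u) * x i ^ (r + 1 - e.card) = -x u ^ (r + 1) :=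
    fun u hu => prod_mul_pow_eq_neg_pow hrk (heig u) (hmax u) he hu hi
  have hconst : ∀ u ∈ e, x u = x i :=
    fun u hu => hodd.pow_inj.1 (neg_inj.1 ((hloc u hu).symm.trans (hloc i hi)))
  have h := hloc i hi
  rw [prod_congr rfl hconst, prod_const, ← pow_add, Nat.add_sub_cancel' (hrk e he)] at h
  have hxi : x i = 0 := pow_eq_zero_iff (n := r + 1) (by omega) |>.1 (by linarith)
  exact hxj (abs_eq_zero.1 ((hmod i).symm.trans (abs_eq_zero.2 hxi)))

end Eigenvector

/-- if `0` is an H-eigenvalue of the signless Laplacian `Q_G` of a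
connected hypergraph, with real eigenvector `x`, then `k` is even; for a coordinate
`j` of maximal `|x_j|`, every edge `e` and `i ∈ e` satisfy
`x^e xᵢ^{k-|e|} = -x_j^k`; and with `V1 = {u : x_u = -|x_j|}` every edge has even
cardinality and meets `V1` in an odd number of vertices, so `G` is odd-bipartite. -/
theorem stmt13 {n k : ℕ} [NeZero k] (E : Finset (Finset (Fin n)))
    (hE : ∀ e ∈ E, e.Nonempty) (hconn : Conn E) (hrank : HasRank E k)
    (x : Fin n → ℝ) (hx : x ≠ 0)
    (heig : ∀ i, tApply k (qEntry k E) x i = 0) :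
    Even k ∧
    ∀ j : Fin n, (∀ i, |x i| ≤ |x j|) →
      ((∀ e ∈ E, ∀ i ∈ e, (∏ v ∈ e, x v) * x i ^ (k - e.card) = -(x j) ^ k) ∧
       (∀ e ∈ E, Even e.card ∧ Odd (e.filter (fun u => x u = -|x j|)).card)) := by
  obtain ⟨r, rfl⟩ := Nat.exists_eq_succ_of_ne_zero (NeZero.ne k)
  obtain ⟨hrk, e₀, he₀, -⟩ := hrank
  obtain ⟨v₀, hv₀⟩ := Function.ne_iff.1 hx
  have hpos : ∀ j, (∀ i, |x i| ≤ |x j|) → 0 < |x j| :=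
    fun j hj => (abs_pos.2 hv₀).trans_le (hj v₀)
  obtain ⟨j₀, -, hj₀⟩ := exists_max_image univ (fun i => |x i|) ⟨v₀, mem_univ _⟩
  have hmax₀ : ∀ i, |x i| ≤ |x j₀| := fun i => hj₀ i (mem_univ i)
  have heven : Even (r + 1) := even_of_abs_eq hrk heig (abs_eq_of_conn hconn hrk heig hmax₀)
    (abs_pos.1 (hpos j₀ hmax₀)) he₀ (hE e₀ he₀)
  refine ⟨heven, fun j hj => ?_⟩
  have hmod := abs_eq_of_conn hconn hrk heig hj
  have hedge : ∀ e ∈ E, ∀ i ∈ e, (∏ v ∈ e, x v) * x i ^ (r + 1 - e.card) = -x j ^ (r + 1) :=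
    fun e he i hi => by
      rw [prod_mul_pow_eq_neg_pow hrk (heig i) (fun u => (hmod i).symm ▸ hj u) he hi hi,
        ← heven.pow_abs, hmod i, heven.pow_abs]
  refine ⟨hedge, fun e he => even_card_and_odd_card_filter (hpos j hj) heven (hrk e he) (hE e he)
    (fun u _ => abs_eq (hpos j hj).le |>.1 (hmod u)) fun i hi => ?_⟩
  rw [hedge e he i hi, heven.pow_abs]
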